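/- Let u₀, û_m : [0,T) → [0,∞) with ∫₀ᵀ u₀ < ∞. Suppose ‖·‖_{g(0)} ≤ C₃‖·‖_{g(t)} uniformly (uniform equivalence of norms), and the recursive bound û_m(t) ≤ C₃ u_m(t) + C₂ Σ_{l=1}^{m-1} û_l(t) + C₂C₃ u₀(t)(1 + ∫₀ᵗ û_m(τ)dτ) holds for continuous nonnegative functions u_m with ∫₀ᵀ u_m < ∞. If ∫₀ᵀ û_l < ∞ for l = 1,…,m−1, then ∫₀ᵀ û_m < ∞, with the explicit bound ∫₀ᵀ û_m ≤ exp(C₃∫₀ᵀu_m + C₂Σ_l∫₀ᵀû_l + C₂C₃∫₀ᵀu₀) − 1. -/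

import Mathlib

/-! With `F t = 1 + ∫₀ᵗ û_m ≥ 1`, the recursive bound gives `û_m ≤ φ F` for the integrable
weight `φ = C₃ u_m + C₂ ∑ û_l + C₂ C₃ u₀`. Hence `(log F)' ≤ φ`, so `∫₀ᶜ û_m ≤ exp (∫₀ᵀ φ) - 1`
for every `c < T`, and since `û_m ≥ 0` this uniform bound passes to the improper integral
over `[0, T)`. -/

open MeasureTheory Set Filter Topology Real intervalIntegral

theorem one_add_integral_le_exp_integral {f φ : ℝ → ℝ} {a b : ℝ} (hab : a ≤ b)
    (hf : ContinuousOn f (Icc a b)) (hf₀ : ∀ t ∈ Icc a b, 0 ≤ f t)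
    (hφ : IntervalIntegrable φ volume a b)
    (hfφ : ∀ t ∈ Icc a b, f t ≤ φ t * (1 + ∫ s in a..t, f s)) :
    1 + ∫ t in a..b, f t ≤ exp (∫ t in a..b, φ t) := by
  set F : ℝ → ℝ := fun t => 1 + ∫ s in a..t, f s
  have hF_one : ∀ t ∈ Icc a b, 1 ≤ F t := fun t ht =>
    le_add_of_nonneg_right <| integral_nonneg ht.1 fun s hs => hf₀ s ⟨hs.1, hs.2.trans ht.2⟩
  have hF_pos : ∀ t ∈ Icc a b, 0 < F t := fun t ht => one_pos.trans_le (hF_one t ht)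
  have hF_cont : ContinuousOn F (Icc a b) := by
    have := continuousOn_primitive_interval (μ := volume) (a := a) (b := b)
      (by simpa only [uIcc_of_le hab] using hf.integrableOn_Icc)
    rw [uIcc_of_le hab] at this
    exact continuousOn_const.add this
  have hF_deriv : ∀ t ∈ Ioo a b, HasDerivAt F (f t) t := fun t ht =>
    (integral_hasDerivAt_right
      ((hf.mono (Icc_subset_Icc_right ht.2.le)).intervalIntegrable_of_Icc ht.1.le)
      ((hf.mono Ioo_subset_Icc_self).stronglyMeasurableAtFilter isOpen_Ioo t ht)
      ((hf.mono Ioo_subset_Icc_self).continuousAt (isOpen_Ioo.mem_nhds ht))).const_add 1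
  have hfF_int : IntervalIntegrable (fun t => f t / F t) volume a b :=
    (hf.div hF_cont fun t ht => (hF_pos t ht).ne').intervalIntegrable_of_Icc hab
  have hlog : ∫ t in a..b, f t / F t = log (F b) := by
    have := integral_eq_sub_of_hasDeriv_right_of_le hab
      (hF_cont.log fun t ht => (hF_pos t ht).ne')
      (fun t ht => ((hF_deriv t ht).log (hF_pos t (Ioo_subset_Icc_self ht)).ne').hasDerivWithinAt)
      hfF_int
    simpa only [F, integral_same, add_zero, log_one, sub_zero] using this
  have hmono : ∫ t in a..b, f t / F t ≤ ∫ t in a..b, φ t :=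
    integral_mono_on hab hfF_int hφ fun t ht => (div_le_iff₀ (hF_pos t ht)).2 (hfφ t ht)
  calc 1 + ∫ t in a..b, f t = exp (log (F b)) := (exp_log (hF_pos b (right_mem_Icc.2 hab))).symm
    _ ≤ exp (∫ t in a..b, φ t) := exp_le_exp.2 (hlog ▸ hmono)

theorem intervalIntegrable_and_integral_le_of_forall_lt {f : ℝ → ℝ} {a b M : ℝ} (hab : a < b)
    (hf : ContinuousOn f (Ico a b)) (hf₀ : ∀ t ∈ Ioo a b, 0 ≤ f t)
    (hM : ∀ c ∈ Ioo a b, ∫ t in a..c, f t ≤ M) :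
    IntervalIntegrable f volume a b ∧ ∫ t in a..b, f t ≤ M := by
  obtain ⟨u, -, hu_mem, hu_lim⟩ := exists_seq_strictMono_tendsto' hab
  have hf_Ioc : ∀ c ∈ Ioo a b, IntegrableOn f (Ioc a c) := fun c hc =>
    ((hf.mono (Icc_subset_Ico_right hc.2)).integrableOn_Icc).mono_set Ioc_subset_Icc_self
  have hf_Ioc_ab : IntegrableOn f (Ioc a b) := by
    refine integrableOn_Ioc_of_intervalIntegral_norm_bounded_right (I := M)
      (fun n => hf_Ioc _ (hu_mem n)) hu_lim (Eventually.of_forall fun n => ?_)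
    refine le_of_eq_of_le ?_ (hM _ (hu_mem n))
    rw [integral_of_le (hu_mem n).1.le]
    exact setIntegral_congr_fun measurableSet_Ioc fun t ht =>
      Real.norm_of_nonneg (hf₀ t ⟨ht.1, ht.2.trans_lt (hu_mem n).2⟩)
  have hprim : ContinuousWithinAt (fun c => ∫ t in a..c, f t) (Icc a b) b := by
    have := continuousOn_primitive_interval (μ := volume) (a := a) (b := b) (f := f)
      (by rwa [uIcc_of_le hab.le, integrableOn_Icc_iff_integrableOn_Ioc])
    rw [uIcc_of_le hab.le] at this
    exact this b (right_mem_Icc.2 hab.le)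
  have hu_lim' : Tendsto u atTop (𝓝[Icc a b] b) :=
    tendsto_nhdsWithin_of_tendsto_nhds_of_eventually_within _ hu_lim
      (Eventually.of_forall fun n => Ioo_subset_Icc_self (hu_mem n))
  exact ⟨(intervalIntegrable_iff_integrableOn_Ioc_of_le hab.le).2 hf_Ioc_ab,
    le_of_tendsto' (hprim.tendsto.comp hu_lim') fun n => hM _ (hu_mem n)⟩

theorem intervalIntegrable_and_integral_le_exp_sub_one {f φ : ℝ → ℝ} {a b : ℝ} (hab : a < b)
    (hf : ContinuousOn f (Ico a b)) (hf₀ : ∀ t ∈ Ico a b, 0 ≤ f t)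
    (hφ : IntervalIntegrable φ volume a b) (hφ₀ : ∀ t ∈ Ioo a b, 0 ≤ φ t)
    (hfφ : ∀ t ∈ Ico a b, f t ≤ φ t * (1 + ∫ s in a..t, f s)) :
    IntervalIntegrable f volume a b ∧ ∫ t in a..b, f t ≤ exp (∫ t in a..b, φ t) - 1 := by
  refine intervalIntegrable_and_integral_le_of_forall_lt hab hf
    (fun t ht => hf₀ t (Ioo_subset_Ico_self ht)) fun c hc => ?_
  have hsub : Icc a c ⊆ Ico a b := Icc_subset_Ico_right hc.2
  have hφ_mono : ∫ t in a..c, φ t ≤ ∫ t in a..b, φ t := by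
    refine integral_mono_interval le_rfl hc.1.le hc.2.le ?_ hφ
    rw [← Measure.restrict_congr_set Ioo_ae_eq_Ioc]
    exact ae_restrict_of_forall_mem measurableSet_Ioo hφ₀
  have hφc : IntervalIntegrable φ volume a c :=
    hφ.mono_set (uIcc_subset_uIcc_left (Icc_subset_uIcc (Ioo_subset_Icc_self hc)))
  have hgronwall := one_add_integral_le_exp_integral hc.1.le (hf.mono hsub)
    (fun t ht => hf₀ t (hsub ht)) hφc fun t ht => hfφ t (hsub ht)
  linarith [exp_le_exp.2 hφ_mono]

theorem stmt11_general (T : ℝ) (hT : 0 < T) (m : ℕ)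
    (u₀ um : ℝ → ℝ) (uhat : ℕ → ℝ → ℝ) (C₂ C₃ : ℝ)
    (hC₂ : 0 ≤ C₂) (hC₃ : 0 ≤ C₃)
    (hu₀nn : ∀ t ∈ Set.Ico (0 : ℝ) T, 0 ≤ u₀ t)
    (humnn : ∀ t ∈ Set.Ico (0 : ℝ) T, 0 ≤ um t)
    (huhatnn : ∀ l, ∀ t ∈ Set.Ico (0 : ℝ) T, 0 ≤ uhat l t)
    (hcont : ContinuousOn (uhat m) (Set.Ico 0 T))
    (hu₀int : IntervalIntegrable u₀ volume 0 T)
    (humint : IntervalIntegrable um volume 0 T)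
    (huhatint : ∀ l ∈ Finset.Ico 1 m, IntervalIntegrable (uhat l) volume 0 T)
    (hrec : ∀ t ∈ Set.Ico (0 : ℝ) T,
      uhat m t ≤ C₃ * um t + C₂ * (∑ l ∈ Finset.Ico 1 m, uhat l t)
        + C₂ * C₃ * u₀ t * (1 + ∫ τ in (0 : ℝ)..t, uhat m τ)) :
    IntervalIntegrable (uhat m) volume 0 T ∧
    (∫ t in (0 : ℝ)..T, uhat m t)
      ≤ Real.exp (C₃ * (∫ t in (0 : ℝ)..T, um t)
          + C₂ * (∑ l ∈ Finset.Ico 1 m, ∫ t in (0 : ℝ)..T, uhat l t)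
          + C₂ * C₃ * (∫ t in (0 : ℝ)..T, u₀ t)) - 1 := by
  set ψ : ℝ → ℝ := fun t => C₃ * um t + C₂ * (∑ l ∈ Finset.Ico 1 m, uhat l t)
  set φ : ℝ → ℝ := fun t => ψ t + C₂ * C₃ * u₀ t
  have hψ₀ : ∀ t ∈ Ico 0 T, 0 ≤ ψ t := fun t ht =>
    add_nonneg (mul_nonneg hC₃ (humnn t ht))
      (mul_nonneg hC₂ (Finset.sum_nonneg fun l _ => huhatnn l t ht))
  have hφ₀ : ∀ t ∈ Ico 0 T, 0 ≤ φ t := fun t ht =>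
    add_nonneg (hψ₀ t ht) (mul_nonneg (mul_nonneg hC₂ hC₃) (hu₀nn t ht))
  have hsum_int : IntervalIntegrable (fun t => ∑ l ∈ Finset.Ico 1 m, uhat l t) volume 0 T := by
    simpa only [Finset.sum_fn] using IntervalIntegrable.sum _ huhatint
  have hψ_int : IntervalIntegrable ψ volume 0 T :=
    (humint.const_mul C₃).add (hsum_int.const_mul C₂)
  have hφ_int : IntervalIntegrable φ volume 0 T := hψ_int.add (hu₀int.const_mul _)
  have hφ_integral : ∫ t in 0..T, φ t = C₃ * (∫ t in (0 : ℝ)..T, um t)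
      + C₂ * (∑ l ∈ Finset.Ico 1 m, ∫ t in (0 : ℝ)..T, uhat l t)
      + C₂ * C₃ * (∫ t in (0 : ℝ)..T, u₀ t) := by
    rw [integral_add hψ_int (hu₀int.const_mul _), integral_add (humint.const_mul C₃)
      (hsum_int.const_mul C₂), intervalIntegral.integral_const_mul,
      intervalIntegral.integral_const_mul, intervalIntegral.integral_const_mul,
      integral_finsetSum huhatint]
  refine hφ_integral ▸ intervalIntegrable_and_integral_le_exp_sub_one hT hcont (huhatnn m)
    hφ_int (fun t ht => hφ₀ t (Ioo_subset_Ico_self ht)) fun t ht => ?_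
  have hint : 0 ≤ ∫ s in 0..t, uhat m s :=
    integral_nonneg ht.1 fun s hs => huhatnn m s ⟨hs.1, hs.2.trans_lt ht.2⟩
  linarith [hrec t ht, mul_nonneg (hψ₀ t ht) hint]

/-- Inductive step of Lemma 3.4: the recursive integral bound propagates
integrability, with the explicit exponential bound. -/
theorem stmt11 (T : ℝ) (hT : 0 < T) (m : ℕ) (hm : 1 ≤ m)
    (u₀ um : ℝ → ℝ) (uhat : ℕ → ℝ → ℝ) (C₂ C₃ : ℝ)
    (hC₂ : 0 ≤ C₂) (hC₃ : 0 ≤ C₃)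
    (hu₀nn : ∀ t ∈ Set.Ico (0 : ℝ) T, 0 ≤ u₀ t)
    (humnn : ∀ t ∈ Set.Ico (0 : ℝ) T, 0 ≤ um t)
    (huhatnn : ∀ l, ∀ t ∈ Set.Ico (0 : ℝ) T, 0 ≤ uhat l t)
    (hcont : ContinuousOn (uhat m) (Set.Ico 0 T))
    (hu₀int : IntervalIntegrable u₀ volume 0 T)
    (humint : IntervalIntegrable um volume 0 T)
    (huhatint : ∀ l ∈ Finset.Ico 1 m, IntervalIntegrable (uhat l) volume 0 T)
    (hrec : ∀ t ∈ Set.Ico (0 : ℝ) T,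
      uhat m t ≤ C₃ * um t + C₂ * (∑ l ∈ Finset.Ico 1 m, uhat l t)
        + C₂ * C₃ * u₀ t * (1 + ∫ τ in (0 : ℝ)..t, uhat m τ)) :
    IntervalIntegrable (uhat m) volume 0 T ∧
    (∫ t in (0 : ℝ)..T, uhat m t)
      ≤ Real.exp (C₃ * (∫ t in (0 : ℝ)..T, um t)
          + C₂ * (∑ l ∈ Finset.Ico 1 m, ∫ t in (0 : ℝ)..T, uhat l t)
          + C₂ * C₃ * (∫ t in (0 : ℝ)..T, u₀ t)) - 1 :=
  stmt11_general T hT m u₀ um uhat C₂ C₃ hC₂ hC₃ hu₀nn humnn huhatnn hcont hu₀int humint huhatint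
    hrec
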